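/- Let k_1 and k_2 be even positive integers, and let PR′ ≤ ℤ/k_1ℤ × ℤ/k_2ℤ be the subgroup of pairs (c_1, c_2) with c_1 + c_2 ≡ 0 (mod 2) (the parity-kernel subgroup). Then PR′ is a cyclic group if and only if k_1/2 and k_2/2 are coprime. -/
import Mathlib


/-- The parity homomorphism `ℤ/k₁ℤ × ℤ/k₂ℤ → ℤ/2ℤ`, `(c₁, c₂) ↦ c₁ + c₂ (mod 2)`,
for `k₁, k₂` both even. Its kernel is the parity-kernel subgroup `PR′`. -/
def parityHomTwo (k₁ k₂ : ℕ) (h₁ : 2 ∣ k₁) (h₂ : 2 ∣ k₂) :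
    ZMod k₁ × ZMod k₂ →+ ZMod 2 :=
  (ZMod.castHom h₁ (ZMod 2)).toAddMonoidHom.comp (AddMonoidHom.fst (ZMod k₁) (ZMod k₂)) +
    (ZMod.castHom h₂ (ZMod 2)).toAddMonoidHom.comp (AddMonoidHom.snd (ZMod k₁) (ZMod k₂))

/-- For even positive integers `k₁, k₂`, the parity-kernel subgroup
`PR′ ≤ ℤ/k₁ℤ × ℤ/k₂ℤ` of pairs `(c₁, c₂)` with `c₁ + c₂ ≡ 0 (mod 2)` is cyclic if and only
if `k₁/2` and `k₂/2` are coprime. -/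
theorem parityKernel_two_cyclic_iff
    (k₁ k₂ : ℕ) (hk₁ : 0 < k₁) (hk₂ : 0 < k₂) (h₁ : 2 ∣ k₁) (h₂ : 2 ∣ k₂) :
    IsAddCyclic (parityHomTwo k₁ k₂ h₁ h₂).ker ↔ Nat.Coprime (k₁ / 2) (k₂ / 2) := by
  classical
  haveI : NeZero k₁ := ⟨hk₁.ne'⟩
  haveI : NeZero k₂ := ⟨hk₂.ne'⟩
  obtain ⟨a, rfl⟩ := h₁
  obtain ⟨b, rfl⟩ := h₂
  have h₁ : (2:ℕ) ∣ 2 * a := ⟨a, rfl⟩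
  have h₂ : (2:ℕ) ∣ 2 * b := ⟨b, rfl⟩
  have ha : 0 < a := by omega
  have hb : 0 < b := by omega
  set σ := parityHomTwo (2 * a) (2 * b) h₁ h₂ with hσdef
  rw [Nat.mul_div_cancel_left a (by norm_num), Nat.mul_div_cancel_left b (by norm_num)]
  have happ : ∀ x : ZMod (2 * a) × ZMod (2 * b),
      σ x = ZMod.castHom h₁ (ZMod 2) x.1 + ZMod.castHom h₂ (ZMod 2) x.2 := fun x => rfl
  have hsurj : Function.Surjective σ := by
    intro t
    refine ⟨(t.cast, 0), ?_⟩
    rw [happ]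
    simp
  -- cardinality of the kernel
  have hcardK : Nat.card σ.ker * 2 = 2 * a * (2 * b) := by
    have hq : Nat.card ((ZMod (2 * a) × ZMod (2 * b)) ⧸ σ.ker) = 2 := by
      rw [Nat.card_congr (QuotientAddGroup.quotientKerEquivOfSurjective σ hsurj).toEquiv]
      simp [Nat.card_eq_fintype_card]
    have h := AddSubgroup.card_eq_card_quotient_mul_card_addSubgroup σ.ker
    rw [hq, Nat.card_prod, Nat.card_zmod, Nat.card_zmod] at h
    omega
  constructor
  · -- cyclic → coprime
    intro hcyc
    by_contra hcop
    set d := Nat.gcd a b with hd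
    have hdpos : 0 < d := Nat.gcd_pos_of_pos_left b ha
    have hd1 : 2 ≤ d := by
      rcases Nat.eq_or_lt_of_le hdpos with h | h
      · exact absurd h.symm hcop
      · exact h
    have hda : d ∣ a := Nat.gcd_dvd_left a b
    have hdb : d ∣ b := Nat.gcd_dvd_right a b
    have e1 : d * (a / d) = a := Nat.mul_div_cancel' hda
    have e2 : d * (b / d) = b := Nat.mul_div_cancel' hdb
    haveI : NeZero d := ⟨hdpos.ne'⟩
    -- an injection of (ZMod d)² into the d-torsion of the kernel
    set f : ZMod d × ZMod d → ZMod (2 * a) × ZMod (2 * b) := fun p =>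
      (((p.1.val * (2 * (a / d)) : ℕ) : ZMod (2 * a)),
       ((p.2.val * (2 * (b / d)) : ℕ) : ZMod (2 * b))) with hf
    have hmem : ∀ p, f p ∈ σ.ker := by
      intro p
      rw [AddMonoidHom.mem_ker, happ]
      simp only [hf, map_natCast]
      rw [← Nat.cast_add, ZMod.natCast_eq_zero_iff]
      exact Dvd.dvd.add ⟨p.1.val * (a / d), by ring⟩ ⟨p.2.val * (b / d), by ring⟩
    have htor : ∀ p, d • f p = 0 := by
      intro p
      simp only [hf, Prod.smul_mk, Prod.mk_eq_zero, nsmul_eq_mul, ← Nat.cast_mul,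
        Nat.cast_ofNat, ZMod.natCast_eq_zero_iff]
      constructor
      · refine ⟨p.1.val, ?_⟩
        calc d * (p.1.val * (2 * (a / d))) = (d * (a / d)) * (2 * p.1.val) := by ring
          _ = 2 * a * p.1.val := by rw [e1]; ring
      · refine ⟨p.2.val, ?_⟩
        calc d * (p.2.val * (2 * (b / d))) = (d * (b / d)) * (2 * p.2.val) := by ring
          _ = 2 * b * p.2.val := by rw [e2]; ring
    have hq1 : 0 < 2 * (a / d) := by
      have := Nat.div_pos (Nat.le_of_dvd ha hda) hdpos; omega
    have hq2 : 0 < 2 * (b / d) := by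
      have := Nat.div_pos (Nat.le_of_dvd hb hdb) hdpos; omega
    have hinj : Function.Injective f := by
      intro p q hpq
      have h1 := congrArg Prod.fst hpq
      have h2 := congrArg Prod.snd hpq
      simp only [hf] at h1 h2
      have l1 : ∀ i : ZMod d, i.val * (2 * (a / d)) < 2 * a := by
        intro i
        calc i.val * (2 * (a / d)) < d * (2 * (a / d)) :=
              Nat.mul_lt_mul_of_lt_of_le (ZMod.val_lt i) le_rfl hq1
          _ = 2 * a := by rw [show d * (2 * (a/d)) = 2 * (d * (a/d)) by ring, e1]
      have l2 : ∀ j : ZMod d, j.val * (2 * (b / d)) < 2 * b := by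
        intro j
        calc j.val * (2 * (b / d)) < d * (2 * (b / d)) :=
              Nat.mul_lt_mul_of_lt_of_le (ZMod.val_lt j) le_rfl hq2
          _ = 2 * b := by rw [show d * (2 * (b/d)) = 2 * (d * (b/d)) by ring, e2]
      have n1 : p.1.val * (2 * (a / d)) = q.1.val * (2 * (a / d)) := by
        have := congrArg ZMod.val h1
        rwa [ZMod.val_cast_of_lt (l1 p.1), ZMod.val_cast_of_lt (l1 q.1)] at this
      have n2 : p.2.val * (2 * (b / d)) = q.2.val * (2 * (b / d)) := by
        have := congrArg ZMod.val h2
        rwa [ZMod.val_cast_of_lt (l2 p.2), ZMod.val_cast_of_lt (l2 q.2)] at this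
      have v1 : p.1.val = q.1.val := Nat.eq_of_mul_eq_mul_right hq1 n1
      have v2 : p.2.val = q.2.val := Nat.eq_of_mul_eq_mul_right hq2 n2
      exact Prod.ext (ZMod.val_injective d v1) (ZMod.val_injective d v2)
    -- count d-torsion elements in the cyclic kernel
    haveI : Fintype σ.ker := Fintype.ofFinite _
    set g : ZMod d × ZMod d → σ.ker := fun p => ⟨f p, hmem p⟩ with hg
    have hginj : Function.Injective g := fun p q hpq =>
      hinj (congrArg Subtype.val hpq)
    have hgmem : ∀ p, g p ∈ Finset.univ.filter (fun x : σ.ker => d • x = 0) := by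
      intro p
      simp only [Finset.mem_filter, Finset.mem_univ, true_and]
      have : ((d • g p : σ.ker) : ZMod (2 * a) × ZMod (2 * b)) = d • f p := rfl
      exact Subtype.ext (this.trans (htor p))
    have hle : Fintype.card (ZMod d × ZMod d) ≤
        (Finset.univ.filter (fun x : σ.ker => d • x = 0)).card := by
      rw [← Finset.card_univ]
      exact Finset.card_le_card_of_injOn g (fun p _ => hgmem p) hginj.injOn
    have hcyc' := IsAddCyclic.card_nsmul_eq_zero_le (α := σ.ker) hdpos
    rw [Fintype.card_prod, ZMod.card] at hle
    nlinarith [le_trans hle hcyc']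
  · -- coprime → cyclic
    intro hcop
    have hmem : ((1 : ZMod (2 * a)), (1 : ZMod (2 * b))) ∈ σ.ker := by
      rw [AddMonoidHom.mem_ker, happ]
      simp only [map_one]
      decide
    have hord : addOrderOf (⟨_, hmem⟩ : σ.ker) = Nat.card σ.ker := by
      rw [AddSubgroup.addOrderOf_mk, Prod.addOrderOf]
      simp only [ZMod.addOrderOf_one]
      have hg : Nat.gcd (2 * a) (2 * b) = 2 := by
        rw [Nat.gcd_mul_left, hcop]
      have := Nat.gcd_mul_lcm (2 * a) (2 * b)
      rw [hg] at this
      omega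
    exact isAddCyclic_of_addOrderOf_eq_card _ hord
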